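/- arXiv:2402.08438 — 3 statements merged into one kernel-verified Lean document; each statement's English description precedes it below -/
import Mathlib

section
/- Let A : Fin l → Matrix (Fin m) (Fin m) ℝ be a symmetric third-order tensor. Then the real symmetric matrix bcirc(A) is positive semidefinite if and only if for every k ∈ Fin l the complex matrix D_k(A) := Σ_{s=0}^{l−1} e^{−2πi·sk/l} · A⁽ˢ⁾ is Hermitian positive semidefinite. -/
/-! With `ω = exp(-2πi/l)` and `F = (ω^{ks})_{k,s}` the DFT matrix, the vector `p ↦ ω^{kp}`
is an eigenvector of every circulant, so the block DFT matrix `F ⊗ I` block-diagonalizes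
`bcirc A`: `(F ⊗ I) bcirc(A) (F ⊗ I)ᴴ = l · diag(D_0(A), …, D_{l-1}(A))`. Since
`F Fᴴ = l · I`, the matrix `F ⊗ I` is invertible, so this congruence preserves positive
semidefiniteness in both directions, and a block-diagonal matrix is positive semidefinite iff
each of its blocks is. -/

open Matrix ComplexOrder

/-- The block circulant matrix of a third-order tensor given by its frontal slices. -/
def bcirc {m n l : ℕ} (A : Fin l → Matrix (Fin m) (Fin n) ℝ) :
    Matrix (Fin l × Fin m) (Fin l × Fin n) ℝ :=
  Matrix.of fun p q => A (p.1 - q.1) p.2 q.2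

/-- The `k`-th diagonal block `D_k(A) = Σ_{s=0}^{l-1} exp(-2πi·sk/l) · A⁽ˢ⁾`. -/
noncomputable def dftSlice {m n l : ℕ} (A : Fin l → Matrix (Fin m) (Fin n) ℝ) (k : Fin l) :
    Matrix (Fin m) (Fin n) ℂ :=
  ∑ s : Fin l,
    Complex.exp (-(2 * (Real.pi : ℂ) * Complex.I * ((s : ℕ) * (k : ℕ) : ℕ) / (l : ℂ))) •
      (A s).map (Complex.ofReal)

open scoped Kronecker
open Fin.CommRing

namespace Matrix

variable {n o 𝕜 : Type*} [Fintype n] [RCLike 𝕜]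

theorem posSemidef_map_ofReal_iff {M : Matrix n n ℝ} :
    (M.map Complex.ofReal).PosSemidef ↔ M.PosSemidef := by
  constructor
  · intro h
    refine .of_dotProduct_mulVec_nonneg ?_ fun x => ?_
    · ext i j
      simpa using congr_fun₂ h.isHermitian i j
    · have hx := h.dotProduct_mulVec_nonneg (Complex.ofReal ∘ x)
      have hform :
          star (Complex.ofReal ∘ x) ⬝ᵥ (M.map Complex.ofReal *ᵥ (Complex.ofReal ∘ x)) =
            ((star x ⬝ᵥ (M *ᵥ x) : ℝ) : ℂ) := by
        simp [dotProduct, mulVec]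
      exact_mod_cast hform ▸ hx
  · classical
    intro h
    open scoped MatrixOrder in
    obtain ⟨B, rfl⟩ := CStarAlgebra.nonneg_iff_eq_star_mul_self.mp h.nonneg
    have hmap : (star B * B).map Complex.ofReal =
        (B.map Complex.ofReal)ᴴ * B.map Complex.ofReal := by
      rw [show (Complex.ofReal : ℝ → ℂ) = Complex.ofRealHom from rfl, Matrix.map_mul,
        star_eq_conjTranspose, conjTranspose_map _ fun r => by simp]
    rw [hmap]
    exact posSemidef_conjTranspose_mul_self _

omit [Fintype n] in
theorem posSemidef_smul_iff {M : Matrix n n 𝕜} {c : 𝕜} (hc : 0 < c) :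
    (c • M).PosSemidef ↔ M.PosSemidef := by
  refine ⟨fun h => ?_, fun h => h.smul hc.le⟩
  simpa [smul_smul, inv_mul_cancel₀ hc.ne'] using h.smul (inv_pos.mpr hc).le

theorem posSemidef_blockDiagonal_iff {R : Type*} [Ring R] [PartialOrder R] [StarRing R]
    [AddLeftMono R] [Fintype o] [DecidableEq o] {M : o → Matrix n n R} :
    (blockDiagonal M).PosSemidef ↔ ∀ k, (M k).PosSemidef := by
  constructor
  · intro h k
    have hblock : (blockDiagonal M).submatrix (·, k) (·, k) = M k := by
      ext i j
      simp [blockDiagonal_apply]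
    exact hblock ▸ h.submatrix _
  · intro h
    refine .of_dotProduct_mulVec_nonneg
      (isHermitian_blockDiagonal_iff.mpr fun k => (h k).isHermitian) fun x => ?_
    have hform : star x ⬝ᵥ (blockDiagonal M *ᵥ x) =
        ∑ k, star (fun i => x (i, k)) ⬝ᵥ (M k *ᵥ fun i => x (i, k)) := by
      simp only [dotProduct, Pi.star_apply, mulVec, blockDiagonal_apply, ite_mul, zero_mul,
        Fintype.sum_prod_type, Finset.sum_ite_eq, Finset.mem_univ, ↓reduceIte, Finset.mul_sum]
      exact Finset.sum_comm
    rw [hform]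
    exact Finset.sum_nonneg fun k _ => (h k).dotProduct_mulVec_nonneg _

end Matrix

section DFT

variable {l : ℕ} [NeZero l]

lemma isPrimitiveRoot_exp_neg :
    IsPrimitiveRoot (Complex.exp (-(2 * Real.pi * Complex.I / l))) l := by
  rw [Complex.exp_neg]
  exact (Complex.isPrimitiveRoot_exp l (NeZero.ne l)).inv

variable (l) in
noncomputable def dftChar : AddChar (Fin l) ℂ where
  toFun s := Complex.exp (-(2 * Real.pi * Complex.I / l)) ^ (s : ℕ)
  map_zero_eq_one' := by simp
  map_add_eq_mul' a b := by
    rw [Fin.val_add, ← pow_add, ← pow_eq_pow_mod _ isPrimitiveRoot_exp_neg.pow_eq_one]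

lemma dftChar_apply (s : Fin l) :
    dftChar l s = Complex.exp (-(2 * Real.pi * Complex.I / l)) ^ (s : ℕ) :=
  rfl

lemma dftChar_isPrimitive : (dftChar l).IsPrimitive := by
  intro a ha h
  have h1 := DFunLike.congr_fun h 1
  rw [AddChar.mulShift_apply, mul_one, AddChar.one_apply, dftChar_apply] at h1
  exact isPrimitiveRoot_exp_neg.pow_ne_one_of_pos_of_lt (Fin.val_ne_zero_iff.mpr ha) a.isLt h1

variable (l) in
noncomputable def dftMatrix : Matrix (Fin l) (Fin l) ℂ :=
  of fun k s => dftChar l (k * s)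

lemma dftMatrix_apply_add (k p q : Fin l) :
    dftMatrix l k (p + q) = dftMatrix l k p * dftMatrix l k q := by
  simp [dftMatrix, mul_add, AddChar.map_add_eq_mul]

lemma dftMatrix_mul_conjTranspose : dftMatrix l * (dftMatrix l)ᴴ = (l : ℂ) • 1 := by
  ext k k'
  have hterm (s : Fin l) :
      dftMatrix l k s * star (dftMatrix l k' s) = dftChar l (s * (k - k')) := by
    rw [dftMatrix, of_apply, of_apply, Complex.star_def, ← AddChar.map_neg_eq_conj,
      ← AddChar.map_add_eq_mul]
    ring_nf
  simp only [mul_apply, conjTranspose_apply, hterm, AddChar.sum_mulShift _ dftChar_isPrimitive,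
    Matrix.smul_apply, one_apply, sub_eq_zero, Fintype.card_fin]
  split_ifs <;> simp

lemma dftSlice_eq_sum_dftMatrix_smul {m n : ℕ} (A : Fin l → Matrix (Fin m) (Fin n) ℝ)
    (k : Fin l) : dftSlice A k = ∑ s, dftMatrix l k s • (A s).map Complex.ofReal := by
  refine Finset.sum_congr rfl fun s _ => ?_
  rw [dftMatrix, of_apply, dftChar_apply, Fin.val_mul,
    ← pow_eq_pow_mod _ isPrimitiveRoot_exp_neg.pow_eq_one, ← Complex.exp_nat_mul]
  congr 2
  push_cast
  ring

lemma sum_dftMatrix_mul_sub (k q : Fin l) (c : Fin l → ℂ) :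
    ∑ p, dftMatrix l k p * c (p - q) = dftMatrix l k q * ∑ s, dftMatrix l k s * c s := by
  rw [Finset.mul_sum, ← Equiv.sum_comp (Equiv.addRight q)]
  refine Finset.sum_congr rfl fun s _ => ?_
  rw [Equiv.coe_addRight, add_sub_cancel_right, dftMatrix_apply_add]
  ring

variable (l) in
noncomputable def blockDftMatrix (m : ℕ) : Matrix (Fin l × Fin m) (Fin l × Fin m) ℂ :=
  dftMatrix l ⊗ₖ 1

variable {m n : ℕ}

lemma blockDftMatrix_mul_conjTranspose :
    blockDftMatrix l m * (blockDftMatrix l m)ᴴ = (l : ℂ) • 1 := by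
  rw [blockDftMatrix, conjTranspose_kronecker, conjTranspose_one, ← mul_kronecker_mul,
    dftMatrix_mul_conjTranspose, Matrix.mul_one, smul_kronecker, one_kronecker_one]

lemma isUnit_blockDftMatrix : IsUnit (blockDftMatrix l m) := by
  refine IsUnit.of_mul_eq_one ((l : ℂ)⁻¹ • (blockDftMatrix l m)ᴴ) ?_
  rw [Matrix.mul_smul, blockDftMatrix_mul_conjTranspose, smul_smul,
    inv_mul_cancel₀ (Nat.cast_ne_zero.mpr (NeZero.ne l)), one_smul]

theorem blockDftMatrix_mul_bcirc (A : Fin l → Matrix (Fin m) (Fin n) ℝ) :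
    blockDftMatrix l m * (bcirc A).map Complex.ofReal =
      (blockDiagonal (dftSlice A)).submatrix Prod.swap Prod.swap * blockDftMatrix l n := by
  ext ⟨k, i⟩ ⟨q, j⟩
  rw [mul_apply, mul_apply]
  simp only [blockDftMatrix, kroneckerMap_apply, one_apply, mul_ite, mul_one, mul_zero, bcirc,
    map_apply, of_apply, ite_mul, zero_mul, Fintype.sum_prod_type, Finset.sum_ite_eq,
    Finset.mem_univ, ↓reduceIte, submatrix_apply, Prod.swap_prod_mk, blockDiagonal_apply,
    Prod.snd_swap, Prod.fst_swap, Finset.sum_ite_eq']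
  refine (sum_dftMatrix_mul_sub k q fun s => (A s i j : ℂ)).trans ?_
  rw [mul_comm, dftSlice_eq_sum_dftMatrix_smul]
  simp [Matrix.sum_apply]

theorem blockDftMatrix_mul_bcirc_mul_conjTranspose (A : Fin l → Matrix (Fin m) (Fin n) ℝ) :
    blockDftMatrix l m * (bcirc A).map Complex.ofReal * (blockDftMatrix l n)ᴴ =
      (l : ℂ) • (blockDiagonal (dftSlice A)).submatrix Prod.swap Prod.swap := by
  rw [blockDftMatrix_mul_bcirc, Matrix.mul_assoc, blockDftMatrix_mul_conjTranspose,
    Matrix.mul_smul, Matrix.mul_one]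

end DFT

theorem bcirc_posSemidef_iff_dftSlices_posSemidef_general
    (m l : ℕ) (A : Fin l → Matrix (Fin m) (Fin m) ℝ) :
    (bcirc A).PosSemidef ↔ ∀ k : Fin l, (dftSlice A k).PosSemidef := by
  rcases l.eq_zero_or_pos with rfl | hl
  · exact iff_of_true (Subsingleton.elim (bcirc A) 0 ▸ .zero) fun k => k.elim0
  have : NeZero l := ⟨hl.ne'⟩
  rw [← posSemidef_map_ofReal_iff, ← isUnit_blockDftMatrix.posSemidef_star_right_conjugate_iff,
    star_eq_conjTranspose, blockDftMatrix_mul_bcirc_mul_conjTranspose,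
    posSemidef_smul_iff (by exact_mod_cast hl), ← posSemidef_blockDiagonal_iff]
  exact posSemidef_submatrix_equiv (Equiv.prodComm _ _)

/-- for a symmetric third-order tensor `A`, the real symmetric matrix
`bcirc(A)` is positive semidefinite iff every Fourier block `D_k(A)` is Hermitian
positive semidefinite. -/
theorem bcirc_posSemidef_iff_dftSlices_posSemidef
    (m l : ℕ) (A : Fin l → Matrix (Fin m) (Fin m) ℝ)
    (hsymm : ∀ k : Fin l, (A k)ᵀ = A (-k)) :
    (bcirc A).PosSemidef ↔ ∀ k : Fin l, (dftSlice A k).PosSemidef :=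
  bcirc_posSemidef_iff_dftSlices_posSemidef_general m l A
end

section
/- The cone of T-positive semidefinite tensors is self-dual: for every symmetric tensor B : Fin l → Matrix (Fin m) (Fin m) ℝ, the matrix bcirc(B) is positive semidefinite if and only if for every symmetric tensor A : Fin l → Matrix (Fin m) (Fin m) ℝ with bcirc(A) positive semidefinite, the tensor inner product ⟨A, B⟩ is nonnegative. -/
open Matrix

/-- The entrywise inner product of two third-order tensors. -/
def tdot {m n l : ℕ} (A B : Fin l → Matrix (Fin m) (Fin n) ℝ) : ℝ :=
  ∑ k : Fin l, ∑ i : Fin m, ∑ j : Fin n, A k i j * B k i j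

/-!
Since `tr (bcirc A * (bcirc B)ᵀ) = l * ⟨A, B⟩` and the trace of a product of two positive
semidefinite matrices is nonnegative, two T-PSD tensors have nonnegative inner product. Conversely,
for every vector `x` the tensor `x * xᵀ` is symmetric and T-PSD (its block circulant matrix is the
sum of the rank-one matrices of the cyclic shifts of `x`), and `⟨x * xᵀ, B⟩ = xᵀ bcirc(B) x`.
-/

open scoped ComplexOrder in
theorem Matrix.PosSemidef.trace_mul_nonneg {𝕜 n : Type*} [RCLike 𝕜] [Fintype n]
    {M N : Matrix n n 𝕜} (hM : M.PosSemidef) (hN : N.PosSemidef) : 0 ≤ trace (M * N) := by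
  classical
  open scoped MatrixOrder in
  obtain ⟨C, rfl⟩ := CStarAlgebra.nonneg_iff_eq_star_mul_self.mp hM.nonneg
  rw [star_eq_conjTranspose, Matrix.mul_assoc, trace_mul_comm]
  exact (hN.mul_mul_conjTranspose_same C).trace_nonneg

/-- The t-product `x * xᵀ` of the `m × 1 × l` tensor whose frontal slices are the columns
`x (k, ·)`. -/
def tOuter {m l : ℕ} (x : Fin l × Fin m → ℝ) : Fin l → Matrix (Fin m) (Fin m) ℝ :=
  fun k => of fun i j => ∑ p, x (p, i) * x (p - k, j)

section
variable {m n l : ℕ} [NeZero l]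

theorem trace_bcirc_mul_transpose (A B : Fin l → Matrix (Fin m) (Fin n) ℝ) :
    trace (bcirc A * (bcirc B)ᵀ) = l * tdot A B := by
  calc trace (bcirc A * (bcirc B)ᵀ)
      = ∑ p : Fin l, ∑ i : Fin m, ∑ q : Fin l, ∑ j : Fin n,
          A (p - q) i j * B (p - q) i j := by
        simp only [← sum_hadamard_eq, hadamard_apply, bcirc, of_apply, Fintype.sum_prod_type]
    _ = ∑ _p : Fin l, ∑ i : Fin m, ∑ k : Fin l, ∑ j : Fin n, A k i j * B k i j := by
        refine Fintype.sum_congr _ _ fun p => Fintype.sum_congr _ _ fun i => ?_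
        exact Fintype.sum_equiv (Equiv.subLeft p) _ _ fun q => by simp
    _ = l * tdot A B := by
        simp only [tdot, Finset.sum_comm (γ := Fin m), Finset.sum_const, Finset.card_univ,
          Fintype.card_fin, nsmul_eq_mul]

theorem isHermitian_bcirc {A : Fin l → Matrix (Fin m) (Fin m) ℝ}
    (hA : ∀ k, (A k)ᵀ = A (-k)) : (bcirc A).IsHermitian := by
  ext ⟨p, i⟩ ⟨q, j⟩
  simp only [conjTranspose_apply, bcirc, of_apply, star_trivial, ← neg_sub p q, ← hA,
    transpose_apply]

theorem transpose_tOuter (x : Fin l × Fin m → ℝ) (k : Fin l) :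
    (tOuter x k)ᵀ = tOuter x (-k) := by
  ext i j
  simp only [transpose_apply, tOuter, of_apply]
  exact Fintype.sum_equiv (Equiv.subRight k) _ _ fun p => by simp [mul_comm]

theorem bcirc_tOuter (x : Fin l × Fin m → ℝ) :
    bcirc (tOuter x) = ∑ s : Fin l,
      vecMulVec (fun u : Fin l × Fin m => x (u.1 + s, u.2)) (fun u => x (u.1 + s, u.2)) := by
  ext ⟨p, i⟩ ⟨q, j⟩
  simp only [bcirc, tOuter, of_apply, Matrix.sum_apply, vecMulVec_apply]
  exact (Fintype.sum_equiv (Equiv.addLeft p) _ _ fun s => by simp [add_comm]).symm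

theorem posSemidef_bcirc_tOuter (x : Fin l × Fin m → ℝ) : (bcirc (tOuter x)).PosSemidef := by
  rw [bcirc_tOuter]
  exact posSemidef_sum _ fun s _ => posSemidef_vecMulVec_self_star _

theorem tdot_tOuter (x : Fin l × Fin m → ℝ) (B : Fin l → Matrix (Fin m) (Fin m) ℝ) :
    tdot (tOuter x) B = star x ⬝ᵥ bcirc B *ᵥ x := by
  calc tdot (tOuter x) B
      = ∑ p : Fin l, ∑ i : Fin m, ∑ k : Fin l, ∑ j : Fin m,
          x (p, i) * (B k i j * x (p - k, j)) := by
        simp only [tdot, tOuter, of_apply, Finset.sum_mul]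
        rw [Fintype.sum_congr _ _ fun k => Finset.sum_comm_cycle, Finset.sum_comm]
        refine Fintype.sum_congr _ _ fun p => ?_
        rw [Finset.sum_comm]
        refine Fintype.sum_congr _ _ fun i => Fintype.sum_congr _ _ fun k =>
          Fintype.sum_congr _ _ fun j => by ring
    _ = ∑ p : Fin l, ∑ i : Fin m, ∑ q : Fin l, ∑ j : Fin m,
          x (p, i) * (B (p - q) i j * x (q, j)) := by
        refine Fintype.sum_congr _ _ fun p => Fintype.sum_congr _ _ fun i => ?_
        exact Fintype.sum_equiv (Equiv.subLeft p) _ _ fun k => by simp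
    _ = star x ⬝ᵥ bcirc B *ᵥ x := by
        simp only [dotProduct, mulVec, bcirc, of_apply, star_trivial, Fintype.sum_prod_type,
          Finset.mul_sum]

end

/-- self-duality of the T-PSD cone: a symmetric tensor `B` is T-PSD iff
`⟨A, B⟩ ≥ 0` for every T-PSD symmetric tensor `A`. -/
theorem tpsd_cone_self_dual
    (m l : ℕ) (B : Fin l → Matrix (Fin m) (Fin m) ℝ)
    (hBsymm : ∀ k : Fin l, (B k)ᵀ = B (-k)) :
    (bcirc B).PosSemidef ↔
      ∀ A : Fin l → Matrix (Fin m) (Fin m) ℝ,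
        (∀ k : Fin l, (A k)ᵀ = A (-k)) → (bcirc A).PosSemidef → 0 ≤ tdot A B := by
  cases l with
  | zero =>
    refine iff_of_true ?_ fun A _ _ => by simp [tdot]
    rw [Subsingleton.elim (bcirc B) 0]
    exact .zero
  | succ l =>
    constructor
    · intro hB A _ hA
      have h := hA.trace_mul_nonneg hB
      rw [← hB.isHermitian.eq, conjTranspose_eq_transpose_of_trivial,
        trace_bcirc_mul_transpose] at h
      exact (mul_nonneg_iff_of_pos_left (by positivity)).mp h
    · intro h
      refine .of_dotProduct_mulVec_nonneg (isHermitian_bcirc hBsymm) fun x => ?_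
      rw [← tdot_tOuter]
      exact h _ (transpose_tOuter x) (posSemidef_bcirc_tOuter x)
end

section
/- For every tensor Z : Fin l → Matrix (Fin m) (Fin m) ℝ and every tensor X : Fin l → Matrix (Fin m) (Fin 1) ℝ, with u := unfold(X) ∈ ℝ^{ml}, the tensor inner product satisfies ⟨Z, X * Xᵀ⟩ = uᵀ · bcirc(Z) · u. Moreover bcirc(X * Xᵀ) = bcirc(X) · (bcirc(X))ᵀ; in particular X * Xᵀ is a symmetric tensor and bcirc(X * Xᵀ) is positive semidefinite, i.e. X * Xᵀ is T-positive semidefinite. -/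
open Matrix

/-- `unfold` of a third-order tensor: the slices stacked vertically. -/
def unfoldT {m n l : ℕ} (A : Fin l → Matrix (Fin m) (Fin n) ℝ) :
    Matrix (Fin l × Fin m) (Fin n) ℝ :=
  Matrix.of fun ki j => A ki.1 ki.2 j

/-- `fold`, the inverse of `unfold`. -/
def foldT {m n l : ℕ} (M : Matrix (Fin l × Fin m) (Fin n) ℝ) :
    Fin l → Matrix (Fin m) (Fin n) ℝ :=
  fun k => Matrix.of fun i j => M (k, i) j

/-- The t-product of third-order tensors: `A * B = fold(bcirc(A) · unfold(B))`. -/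
def tMul {m n p l : ℕ} (A : Fin l → Matrix (Fin m) (Fin n) ℝ)
    (B : Fin l → Matrix (Fin n) (Fin p) ℝ) : Fin l → Matrix (Fin m) (Fin p) ℝ :=
  foldT (bcirc A * unfoldT B)

/-- The transpose of a third-order tensor: `(Aᵀ)⁽ᵏ⁾ = (A⁽⁻ᵏ⁾)ᵀ`. -/
def tTranspose {m n l : ℕ} (A : Fin l → Matrix (Fin m) (Fin n) ℝ) :
    Fin l → Matrix (Fin n) (Fin m) ℝ :=
  fun k => (A (-k))ᵀ

/-!
`bcirc` is an injective embedding of tensors into block matrices that turns the t-product into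
the matrix product and the tensor transpose into the matrix transpose. Hence
`bcirc (X * Xᵀ) = B * Bᵀ` with `B = bcirc X`, which is positive semidefinite, and `X * Xᵀ` is
symmetric because `B * Bᵀ` is. The inner-product identity is a reindexing of the double sum over
block indices `(p, q)` of `uᵀ · bcirc Z · u` by `p = k + q`, where `k` is the slice of `Z` that
the block `(p, q)` carries.
-/

lemma Fintype.sum_sum_add_right {G M : Type*} [AddGroup G] [Fintype G] [AddCommMonoid M]
    (F : G → G → M) : ∑ k, ∑ q, F (k + q) q = ∑ p, ∑ q, F p q := by
  rw [Finset.sum_comm, Finset.sum_comm (f := F)]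
  exact Finset.sum_congr rfl fun q _ => Equiv.sum_comp (Equiv.addRight q) (F · q)

section

variable {m n p l : ℕ}

lemma tMul_apply (A : Fin l → Matrix (Fin m) (Fin n) ℝ) (B : Fin l → Matrix (Fin n) (Fin p) ℝ)
    (k : Fin l) (i : Fin m) (j : Fin p) :
    tMul A B k i j = ∑ r, ∑ c, A (k - r) i c * B r c j := by
  simp [tMul, foldT, bcirc, unfoldT, mul_apply, Fintype.sum_prod_type]

lemma tTranspose_apply_neg (A : Fin l → Matrix (Fin m) (Fin n) ℝ) (k : Fin l) :
    tTranspose A (-k) = (A k)ᵀ := by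
  have := NeZero.of_pos k.pos
  simp [tTranspose]

lemma tTranspose_tTranspose (A : Fin l → Matrix (Fin m) (Fin n) ℝ) :
    tTranspose (tTranspose A) = A := by
  ext k : 1
  rw [tTranspose, tTranspose_apply_neg, transpose_transpose]

lemma tMul_tTranspose_apply (X : Fin l → Matrix (Fin m) (Fin n) ℝ)
    (Y : Fin l → Matrix (Fin p) (Fin n) ℝ) (k : Fin l) (i : Fin m) (j : Fin p) :
    tMul X (tTranspose Y) k i j = ∑ q, ∑ c, X (k + q) i c * Y q j c := by
  have := NeZero.of_pos k.pos
  rw [tMul_apply, ← Equiv.sum_comp (Equiv.neg (Fin l))]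
  simp [tTranspose]

lemma bcirc_tMul (A : Fin l → Matrix (Fin m) (Fin n) ℝ) (B : Fin l → Matrix (Fin n) (Fin p) ℝ) :
    bcirc (tMul A B) = bcirc A * bcirc B := by
  ext ⟨s, i⟩ ⟨t, j⟩
  have := NeZero.of_pos s.pos
  simp only [bcirc, of_apply, tMul_apply, mul_apply, Fintype.sum_prod_type]
  refine Fintype.sum_equiv (Equiv.addRight t) _ _ fun r => ?_
  simp only [Equiv.coe_addRight, add_sub_cancel_right, sub_add_eq_sub_sub_swap]

lemma bcirc_tTranspose (A : Fin l → Matrix (Fin m) (Fin n) ℝ) :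
    bcirc (tTranspose A) = (bcirc A)ᵀ := by
  ext ⟨s, i⟩ ⟨t, j⟩
  have := NeZero.of_pos s.pos
  simp [bcirc, tTranspose]

lemma bcirc_injective : Function.Injective (bcirc : (Fin l → Matrix (Fin m) (Fin n) ℝ) → _) := by
  intro A B h
  ext k i j
  have := NeZero.of_pos k.pos
  simpa [bcirc] using congrFun (congrFun h (k, i)) (0, j)

lemma tTranspose_tMul (A : Fin l → Matrix (Fin m) (Fin n) ℝ)
    (B : Fin l → Matrix (Fin n) (Fin p) ℝ) :
    tTranspose (tMul A B) = tMul (tTranspose B) (tTranspose A) :=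
  bcirc_injective <| by simp only [bcirc_tTranspose, bcirc_tMul, transpose_mul]

lemma tdot_tMul_tTranspose {r : ℕ} (Z : Fin l → Matrix (Fin m) (Fin n) ℝ)
    (X : Fin l → Matrix (Fin m) (Fin r) ℝ) (Y : Fin l → Matrix (Fin n) (Fin r) ℝ) :
    tdot Z (tMul X (tTranspose Y)) = ∑ c, (unfoldT X)ᵀ c ⬝ᵥ bcirc Z *ᵥ (unfoldT Y)ᵀ c := by
  obtain _ | l := l
  · simp [tdot, dotProduct]
  simp only [tdot, tMul_tTranspose_apply, dotProduct, mulVec, bcirc, unfoldT, transpose_apply,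
    of_apply, Fintype.sum_prod_type, Finset.mul_sum]
  -- push the column and row indices innermost on both sides, leaving the slice indices outside
  simp only [Finset.sum_comm (γ := Fin r)]
  simp only [Finset.sum_comm (γ := Fin m)]
  simp only [Finset.sum_comm (γ := Fin n)]
  conv_rhs => rw [← Fintype.sum_sum_add_right]
  simp only [add_sub_cancel_right, mul_left_comm]

end

/-- `⟨Z, X * Xᵀ⟩ = uᵀ · bcirc(Z) · u` with `u = unfold(X)`, and
`bcirc(X * Xᵀ) = bcirc(X) · bcirc(X)ᵀ`; in particular `X * Xᵀ` is symmetric and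
T-positive semidefinite. -/
theorem tdot_tMul_self_eq_quadratic_form
    (m l : ℕ) (Z : Fin l → Matrix (Fin m) (Fin m) ℝ)
    (X : Fin l → Matrix (Fin m) (Fin 1) ℝ) :
    (tdot Z (tMul X (tTranspose X)) =
        (fun ki : Fin l × Fin m => unfoldT X ki 0) ⬝ᵥ
          (bcirc Z).mulVec (fun ki : Fin l × Fin m => unfoldT X ki 0)) ∧
    bcirc (tMul X (tTranspose X)) = bcirc X * (bcirc X)ᵀ ∧
    (∀ k : Fin l, ((tMul X (tTranspose X)) k)ᵀ = (tMul X (tTranspose X)) (-k)) ∧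
    (bcirc (tMul X (tTranspose X))).PosSemidef := by
  have hbcirc : bcirc (tMul X (tTranspose X)) = bcirc X * (bcirc X)ᵀ := by
    rw [bcirc_tMul, bcirc_tTranspose]
  have hsymm : tTranspose (tMul X (tTranspose X)) = tMul X (tTranspose X) := by
    rw [tTranspose_tMul, tTranspose_tTranspose]
  refine ⟨(tdot_tMul_tTranspose Z X X).trans (Fin.sum_univ_one _), hbcirc, fun k => ?_, ?_⟩
  · rw [← tTranspose_apply_neg, hsymm]
  · rw [hbcirc, ← conjTranspose_eq_transpose_of_trivial]
    exact posSemidef_self_mul_conjTranspose _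
end
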